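/- arXiv:2307.11561 — 5 statements merged into one kernel-verified Lean document; each statement's English description precedes it below -/
import Mathlib

section
/- Let X be a Tychonoff (completely regular Hausdorff) space. Then X is a sequentially Ascoli space if and only if for every set Γ, every map T : X → ℓ∞(Γ) (real bounded functions on Γ with the sup norm) satisfying the following three conditions is continuous: (a) T is k-continuous; (b) for every a ∈ ℓ₁(Γ) the function x ↦ Σ_{γ∈Γ} a(γ)·T(x)(γ) is continuous on X; (c) there exist ε > 0 and a sequence (f_n) in C(X,ℝ) converging to 0 in C_k(X) such that for every a ∈ ℓ₁(Γ) with ‖a‖₁ ≤ ε the function x ↦ Σ_{γ∈Γ} a(γ)·T(x)(γ) belongs to the closure in C_k(X) of the absolutely convex hull of {f_n : n ∈ ℕ}. -/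
/-!
A map `T : X → ℓ∞(Γ)` is continuous exactly when its coordinate family `(x ↦ T x γ)_γ` is
equicontinuous. Condition (c) applied to `ε • δ_γ` puts every coordinate of `ε • T` into the
closed absolutely convex hull of a null sequence of `C_k(X)`; if `X` is sequentially Ascoli that
sequence, hence also this hull, is equicontinuous, so `T` is continuous.

Conversely, let `(v n)` be a null sequence in `C_k(X)` and let `s n` be `v n` truncated to
`[-1, 1]`. Then `x ↦ (s n x)ₙ ∈ ℓ∞(ℕ)` satisfies (a), because a null sequence is equicontinuous on
compact sets, (b), because the series `∑ aₙ sₙ` converges uniformly, and (c) with `ε = 1`, because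
its partial sums lie in the absolutely convex hull of the `s n`. Continuity of this map makes
`(s n)` equicontinuous, and since `v n x₀ → 0` the truncation is invisible near `x₀` for large `n`.
-/

/-- `C_k(X)` is `C(X, ℝ)` with the compact-open topology (the default topology on
`ContinuousMap`s in Mathlib). A Tychonoff space `X` is *Ascoli* if every compact
subset of `C_k(X)` is equicontinuous. -/
def IsAscoli (X : Type*) [TopologicalSpace X] : Prop :=
  ∀ K : Set C(X, ℝ), IsCompact K → Equicontinuous fun f : K => ⇑f.1

/-- A Tychonoff space `X` is *sequentially Ascoli* if every convergent sequence in
`C_k(X)` is equicontinuous. -/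
def IsSequentiallyAscoli (X : Type*) [TopologicalSpace X] : Prop :=
  ∀ (u : ℕ → C(X, ℝ)) (g : C(X, ℝ)),
    Filter.Tendsto u Filter.atTop (nhds g) → Equicontinuous fun n => ⇑(u n)

/-- The absolutely convex hull of a set `K ⊆ C(X, ℝ)`: all finite sums `∑ λᵢ • fᵢ`
with `fᵢ ∈ K` and `∑ |λᵢ| ≤ 1`. -/
def absConvexHullOf {X : Type*} [TopologicalSpace X] (K : Set C(X, ℝ)) : Set C(X, ℝ) :=
  {g | ∃ (n : ℕ) (c : Fin n → ℝ) (f : Fin n → C(X, ℝ)),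
    (∀ i, f i ∈ K) ∧ (∑ i, |c i|) ≤ 1 ∧ g = ∑ i, c i • f i}

universe u
open Filter Topology Set

section Equicontinuity

variable {X α : Type*} [TopologicalSpace X] [PseudoMetricSpace α]

theorem equicontinuousWithinAt_of_tail {F : ℕ → X → α} {S : Set X} {x₀ : X}
    (hF : ∀ n, ContinuousWithinAt (F n) S x₀)
    (h : ∀ ε > 0, ∃ N, ∀ᶠ x in 𝓝[S] x₀, ∀ n ≥ N, dist (F n x₀) (F n x) < ε) :
    EquicontinuousWithinAt F S x₀ := by
  rw [Metric.uniformity_basis_dist.equicontinuousWithinAt_iff_right]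
  intro ε hε
  obtain ⟨N, hN⟩ := h ε hε
  have hinit : ∀ᶠ x in 𝓝[S] x₀, ∀ n ∈ Iio N, dist (F n x₀) (F n x) < ε :=
    (eventually_all_finite (finite_Iio N)).2 fun n _ => by
      simpa only [dist_comm] using Metric.tendsto_nhds.1 (hF n) ε hε
  filter_upwards [hN, hinit] with x hx_tail hx_init n
  exact (lt_or_ge n N).elim (hx_init n) (hx_tail n)

theorem TendstoUniformlyOn.equicontinuousWithinAt {F : ℕ → X → α} {f : X → α} {S : Set X}
    {x₀ : X} (h : TendstoUniformlyOn F f atTop S) (hF : ∀ n, ContinuousWithinAt (F n) S x₀)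
    (hf : ContinuousWithinAt f S x₀) (hx₀ : x₀ ∈ S) : EquicontinuousWithinAt F S x₀ := by
  refine equicontinuousWithinAt_of_tail hF fun ε hε => ?_
  obtain ⟨N, hN⟩ :=
    eventually_atTop.1 (Metric.tendstoUniformlyOn_iff.1 h (ε / 3) (by positivity))
  refine ⟨N, ?_⟩
  filter_upwards [Metric.tendsto_nhds.1 hf (ε / 3) (by positivity), self_mem_nhdsWithin]
    with x hfx hxS n hn
  calc dist (F n x₀) (F n x)
        ≤ dist (F n x₀) (f x₀) + dist (f x₀) (f x) + dist (f x) (F n x) :=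
          dist_triangle4 _ _ _ _
    _ < ε / 3 + ε / 3 + ε / 3 := by
        gcongr
        · rw [dist_comm]; exact hN n hn x₀ hx₀
        · rw [dist_comm]; exact hfx
        · exact hN n hn x hxS
    _ = ε := by ring

theorem ContinuousMap.equicontinuousOn_of_tendsto {F : ℕ → C(X, α)} {f : C(X, α)}
    (h : Tendsto F atTop (𝓝 f)) {K : Set X} (hK : IsCompact K) :
    EquicontinuousOn (fun n => ⇑(F n)) K := fun _ hx =>
  (ContinuousMap.tendsto_iff_forall_isCompact_tendstoUniformlyOn.1 h K hK).equicontinuousWithinAt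
    (fun n => (F n).continuous.continuousWithinAt) f.continuous.continuousWithinAt hx

theorem Equicontinuous.add_continuous {ι E : Type*} [SeminormedAddCommGroup E] {F : ι → X → E}
    (hF : Equicontinuous F) {g : X → E} (hg : Continuous g) :
    Equicontinuous fun i => F i + g := by
  intro x₀
  rw [Metric.equicontinuousAt_iff_right]
  intro ε hε
  filter_upwards [Metric.equicontinuousAt_iff_right.1 (hF x₀) (ε / 2) (by positivity),
    Metric.tendsto_nhds.1 (hg.tendsto x₀) (ε / 2) (by positivity)] with x hFx hgx i
  calc dist (F i x₀ + g x₀) (F i x + g x) ≤ dist (F i x₀) (F i x) + dist (g x₀) (g x) :=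
        dist_add_add_le _ _ _ _
    _ < ε / 2 + ε / 2 := add_lt_add (hFx i) (by rwa [dist_comm])
    _ = ε := add_halves ε

end Equicontinuity

namespace lp

variable {X ι E : Type*} [TopologicalSpace X] [NormedAddCommGroup E]

theorem dist_apply_le_dist (f g : lp (fun _ : ι => E) ⊤) (i : ι) :
    dist (f i) (g i) ≤ dist f g := by
  simpa only [dist_eq_norm, coeFn_sub, Pi.sub_apply] using
    norm_apply_le_norm ENNReal.top_ne_zero (f - g) i

theorem dist_le_of_forall_dist_apply_le {f g : lp (fun _ : ι => E) ⊤} {C : ℝ} (hC : 0 ≤ C)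
    (h : ∀ i, dist (f i) (g i) ≤ C) : dist f g ≤ C := by
  rw [dist_eq_norm]
  exact norm_le_of_forall_le hC fun i => by
    simpa only [coeFn_sub, Pi.sub_apply, ← dist_eq_norm] using h i

theorem continuousWithinAt_iff_equicontinuousWithinAt {T : X → lp (fun _ : ι => E) ⊤}
    {S : Set X} {x₀ : X} :
    ContinuousWithinAt T S x₀ ↔ EquicontinuousWithinAt (fun i x => T x i) S x₀ := by
  rw [ContinuousWithinAt, Metric.tendsto_nhds,
    Metric.uniformity_basis_dist.equicontinuousWithinAt_iff_right]
  refine ⟨fun h ε hε => ?_, fun h ε hε => ?_⟩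
  · filter_upwards [h ε hε] with x hx i
    exact (dist_apply_le_dist _ _ i).trans_lt (by rwa [dist_comm])
  · filter_upwards [h (ε / 2) (by positivity)] with x hx
    refine (dist_le_of_forall_dist_apply_le (by positivity) fun i => ?_).trans_lt (half_lt_self hε)
    rw [dist_comm]
    exact (hx i).le

theorem continuousOn_iff_equicontinuousOn {T : X → lp (fun _ : ι => E) ⊤} {S : Set X} :
    ContinuousOn T S ↔ EquicontinuousOn (fun i x => T x i) S :=
  forall₂_congr fun _ _ => continuousWithinAt_iff_equicontinuousWithinAt

theorem continuous_iff_equicontinuous {T : X → lp (fun _ : ι => E) ⊤} :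
    Continuous T ↔ Equicontinuous fun i x => T x i := by
  rw [← continuousOn_univ, continuousOn_iff_equicontinuousOn, equicontinuousOn_univ]

end lp

section AbsConvexHull

variable {X : Type*} [TopologicalSpace X]

theorem dist_le_of_mem_absConvexHullOf {K : Set C(X, ℝ)} {x y : X} {δ : ℝ} (hδ : 0 ≤ δ)
    (hK : ∀ f ∈ K, dist (f x) (f y) ≤ δ) {g : C(X, ℝ)} (hg : g ∈ absConvexHullOf K) :
    dist (g x) (g y) ≤ δ := by
  obtain ⟨n, c, f, hfK, hc, rfl⟩ := hg
  simp only [ContinuousMap.coe_sum, ContinuousMap.coe_smul, Finset.sum_apply, Pi.smul_apply,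
    smul_eq_mul, Real.dist_eq, ← Finset.sum_sub_distrib, ← mul_sub]
  calc |∑ i, c i * (f i x - f i y)| ≤ ∑ i, |c i| * δ := by
        refine (Finset.abs_sum_le_sum_abs _ _).trans (Finset.sum_le_sum fun i _ => ?_)
        rw [abs_mul, ← Real.dist_eq]
        exact mul_le_mul_of_nonneg_left (hK _ (hfK i)) (abs_nonneg _)
    _ ≤ δ := by rw [← Finset.sum_mul]; exact mul_le_of_le_one_left hδ hc

theorem equicontinuous_closure_absConvexHullOf {ι : Type*} {u : ι → C(X, ℝ)}
    (hu : Equicontinuous fun i => ⇑(u i)) :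
    Equicontinuous fun f : closure (absConvexHullOf (range u)) => ⇑(f : C(X, ℝ)) := by
  refine Equicontinuous.closure' (u := DFunLike.coe) (fun x₀ => ?_) continuous_coeFun
  rw [Metric.equicontinuousAt_iff_right]
  intro ε hε
  filter_upwards [Metric.equicontinuousAt_iff_right.1 (hu x₀) (ε / 2) (by positivity)]
    with x hx g
  refine (dist_le_of_mem_absConvexHullOf (by positivity) ?_ g.2).trans_lt (half_lt_self hε)
  rintro _ ⟨i, rfl⟩
  exact (hx i).le

theorem sum_smul_mem_absConvexHullOf {ι : Type*} {K : Set C(X, ℝ)} {s : Finset ι}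
    {c : ι → ℝ} {f : ι → C(X, ℝ)} (hf : ∀ i ∈ s, f i ∈ K)
    (hc : ∑ i ∈ s, |c i| ≤ 1) :
    ∑ i ∈ s, c i • f i ∈ absConvexHullOf K := by
  refine ⟨s.card, fun j => c (s.equivFin.symm j), fun j => f (s.equivFin.symm j),
    fun j => hf _ (s.equivFin.symm j).2, ?_, ?_⟩
  · rwa [← s.sum_coe_sort, ← s.equivFin.symm.sum_comp] at hc
  · rw [← s.sum_coe_sort, ← s.equivFin.symm.sum_comp]

end AbsConvexHull

theorem continuous_of_forall_mem_closure_absConvexHullOf {X Γ ι : Type*} [TopologicalSpace X]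
    {T : X → lp (fun _ : Γ => ℝ) ⊤} {u : ι → C(X, ℝ)}
    (hu : Equicontinuous fun i => ⇑(u i)) {ε : ℝ} (hε : ε ≠ 0)
    (hT : ∀ γ, ∃ g ∈ closure (absConvexHullOf (range u)), ∀ x, g x = ε * T x γ) :
    Continuous T := by
  choose g hg hgT using hT
  have hεT : Continuous fun x => ε • T x := by
    have hcoord : (fun γ x => (ε • T x) γ) = fun γ => ⇑(g γ) := by
      ext γ x
      simp [hgT]
    rw [lp.continuous_iff_equicontinuous, hcoord]
    exact (equicontinuous_closure_absConvexHullOf hu).comp fun γ => ⟨g γ, hg γ⟩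
  exact (hεT.const_smul ε⁻¹).congr fun x => by simp [smul_smul, hε]

theorem lp.hasSum_norm_one {ι E : Type*} [NormedAddCommGroup E] (a : lp (fun _ : ι => E) 1) :
    HasSum (fun i => ‖a i‖) ‖a‖ := by
  simpa using lp.hasSum_norm (p := 1) (by simp) a

theorem lp.tsum_single_one_mul {ι : Type*} [DecidableEq ι] (γ : ι) (c : ℝ) (f : ι → ℝ) :
    ∑' i, lp.single (E := fun _ : ι => ℝ) 1 γ c i * f i = c * f γ := by
  simp [lp.single_apply, Pi.single_apply]

section BoundedFamily

variable {X ι : Type*} [TopologicalSpace X] {t : ι → C(X, ℝ)}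

noncomputable def lpEval (t : ι → C(X, ℝ)) (ht : ∀ i x, |t i x| ≤ 1) (x : X) :
    lp (fun _ : ι => ℝ) ⊤ :=
  ⟨fun i => t i x, memℓp_infty ⟨1, by rintro _ ⟨i, rfl⟩; exact ht i x⟩⟩

@[simp]
theorem lpEval_apply (ht : ∀ i x, |t i x| ≤ 1) (x : X) (i : ι) : lpEval t ht x i = t i x :=
  rfl

theorem tendstoUniformly_sum_mul (ht : ∀ i x, |t i x| ≤ 1) (a : lp (fun _ : ι => ℝ) 1) :
    TendstoUniformly (fun s : Finset ι => fun x => ∑ i ∈ s, a i * t i x)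
      (fun x => ∑' i, a i * t i x) atTop :=
  tendstoUniformly_tsum (lp.hasSum_norm_one a).summable fun i x => by
    rw [norm_mul]
    exact mul_le_of_le_one_right (norm_nonneg _) (ht i x)

theorem continuous_tsum_mul (ht : ∀ i x, |t i x| ≤ 1) (a : lp (fun _ : ι => ℝ) 1) :
    Continuous fun x => ∑' i, a i * t i x :=
  (tendstoUniformly_sum_mul ht a).continuous
    (Eventually.of_forall fun _ => by fun_prop).frequently

theorem tsum_mul_mem_closure_absConvexHullOf (ht : ∀ i x, |t i x| ≤ 1) {K : Set C(X, ℝ)}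
    (htK : ∀ i, t i ∈ K) {a : lp (fun _ : ι => ℝ) 1} (ha : ‖a‖ ≤ 1) :
    ⟨_, continuous_tsum_mul ht a⟩ ∈ closure (absConvexHullOf K) := by
  have hsum : Tendsto (fun s : Finset ι => ∑ i ∈ s, a i • t i) atTop
      (𝓝 ⟨_, continuous_tsum_mul ht a⟩) := by
    refine ContinuousMap.tendsto_of_tendstoLocallyUniformly ?_
    simpa using (tendstoUniformly_sum_mul ht a).tendstoLocallyUniformly
  refine mem_closure_of_tendsto hsum (Eventually.of_forall fun s => ?_)
  refine sum_smul_mem_absConvexHullOf (fun i _ => htK i) (le_trans ?_ ha)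
  simpa only [Real.norm_eq_abs] using
    sum_le_hasSum s (fun _ _ => norm_nonneg _) (lp.hasSum_norm_one a)

end BoundedFamily

noncomputable def clampUnit : C(ℝ, ℝ) :=
  ⟨fun y => max (-1) (min y 1), by fun_prop⟩

@[simp]
theorem clampUnit_zero : clampUnit 0 = 0 := by
  simp [clampUnit]

theorem abs_clampUnit_le_one (y : ℝ) : |clampUnit y| ≤ 1 :=
  abs_le.2 ⟨le_max_left _ _, max_le (by norm_num) (min_le_right _ _)⟩

theorem clampUnit_eq_self {y : ℝ} (h : |y| ≤ 1) : clampUnit y = y := by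
  obtain ⟨h₁, h₂⟩ := abs_le.1 h
  simp [clampUnit, h₁, h₂]

theorem clampUnit_eq_self_of_abs_lt {y : ℝ} (h : |clampUnit y| < 1) : clampUnit y = y := by
  refine clampUnit_eq_self (abs_le.2 ⟨le_of_not_gt fun hy => ?_, le_of_not_gt fun hy => ?_⟩)
  · simp [clampUnit, hy.le, (hy.trans (by norm_num : (-1 : ℝ) < 1)).le] at h
  · simp [clampUnit, hy.le] at h

/-- For large `n`, `v n` is small at `x₀`, and then also near `x₀` by equicontinuity of the clamped
family, where `clampUnit` is the identity. -/
theorem equicontinuousAt_of_equicontinuousAt_clampUnit {X : Type*} [TopologicalSpace X]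
    {v : ℕ → C(X, ℝ)} {x₀ : X}
    (ht : EquicontinuousAt (fun n => ⇑(clampUnit.comp (v n))) x₀)
    (hv : Tendsto (fun n => v n x₀) atTop (𝓝 0)) :
    EquicontinuousAt (fun n => ⇑(v n)) x₀ := by
  rw [← equicontinuousWithinAt_univ]
  refine equicontinuousWithinAt_of_tail (fun n => (v n).continuous.continuousWithinAt)
    fun ε hε => ?_
  obtain ⟨N, hN⟩ := eventually_atTop.1 (Metric.tendsto_nhds.1 hv (1 / 2) one_half_pos)
  refine ⟨N, ?_⟩
  rw [nhdsWithin_univ]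
  filter_upwards [Metric.equicontinuousAt_iff_right.1 ht (min ε (1 / 2)) (by positivity)]
    with x hx n hn
  have hx₀ : |v n x₀| < 1 / 2 := by simpa using hN n hn
  have hxn := hx n
  simp only [ContinuousMap.comp_apply, clampUnit_eq_self (by linarith : |v n x₀| ≤ 1),
    Real.dist_eq] at hxn
  have hx_small : |clampUnit (v n x)| < 1 := by
    have := abs_sub_abs_le_abs_sub (clampUnit (v n x)) (v n x₀)
    rw [abs_sub_comm] at this
    linarith [min_le_right ε (1 / 2)]
  rw [clampUnit_eq_self_of_abs_lt hx_small] at hxn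
  exact (Real.dist_eq _ _).trans_lt (hxn.trans_le (min_le_left _ _))

theorem IsSequentiallyAscoli.of_forall_tendsto_zero {X : Type*} [TopologicalSpace X]
    (h : ∀ v : ℕ → C(X, ℝ), Tendsto v atTop (𝓝 0) → Equicontinuous fun n => ⇑(v n)) :
    IsSequentiallyAscoli X := by
  intro u g hu
  simpa using (h (fun n => u n - g) (by simpa using hu.sub_const g)).add_continuous g.continuous

theorem sequentiallyAscoli_iff_ellInfty_maps_continuous_general
    (X : Type*) [TopologicalSpace X] :
    IsSequentiallyAscoli X ↔
      ∀ (Γ : Type u) (T : X → lp (fun _ : Γ => ℝ) ⊤),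
        -- (a) `T` is k-continuous
        (∀ A : Set X, IsCompact A → ContinuousOn T A) →
        -- (b) every pairing with an element of `ℓ₁(Γ)` is continuous
        (∀ a : lp (fun _ : Γ => ℝ) 1, Continuous fun x => ∑' γ, a γ * T x γ) →
        -- (c) almost k-sequentiality
        (∃ ε : ℝ, 0 < ε ∧ ∃ u : ℕ → C(X, ℝ),
          Filter.Tendsto u Filter.atTop (nhds (0 : C(X, ℝ))) ∧
          ∀ a : lp (fun _ : Γ => ℝ) 1, ‖a‖ ≤ ε →
            ∃ g ∈ closure (absConvexHullOf (Set.range u)), ∀ x : X, g x = ∑' γ, a γ * T x γ) →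
        Continuous T := by
  classical
  constructor
  · rintro hX Γ T - - ⟨ε, hε, u, hu, hT⟩
    refine continuous_of_forall_mem_closure_absConvexHullOf (hX u 0 hu) hε.ne' fun γ => ?_
    obtain ⟨g, hg, hgT⟩ := hT (lp.single 1 γ ε) (by simp [lp.norm_single, abs_of_pos hε])
    exact ⟨g, hg, fun x => by rw [hgT, lp.tsum_single_one_mul]⟩
  · refine fun h => IsSequentiallyAscoli.of_forall_tendsto_zero fun v hv => ?_
    set s : ℕ → C(X, ℝ) := fun n => clampUnit.comp (v n)
    have hs : Tendsto s atTop (𝓝 0) :=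
      ((ContinuousMap.continuous_postcomp clampUnit).tendsto' 0 0 (by ext; simp)).comp hv
    have hbound : ∀ (γ : ULift.{u} ℕ) x, |s γ.down x| ≤ 1 :=
      fun _ _ => abs_clampUnit_le_one _
    have hT : Continuous (lpEval (fun γ : ULift.{u} ℕ => s γ.down) hbound) := by
      refine h _ _ (fun A hA => ?_) (fun a => by simpa using continuous_tsum_mul hbound a)
        ⟨1, one_pos, s, hs, fun a ha => ⟨_, tsum_mul_mem_closure_absConvexHullOf hbound
          (fun γ => mem_range_self γ.down) ha, fun x => by simp⟩⟩
      exact lp.continuousOn_iff_equicontinuousOn.2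
        ((ContinuousMap.equicontinuousOn_of_tendsto hs hA).comp ULift.down)
    have hs_equi : Equicontinuous fun n => ⇑(s n) :=
      (lp.continuous_iff_equicontinuous.1 hT).comp ULift.up
    exact fun x₀ => equicontinuousAt_of_equicontinuousAt_clampUnit (hs_equi x₀)
      (((continuous_eval_const x₀).tendsto' 0 0 rfl).comp hv)

theorem sequentiallyAscoli_iff_ellInfty_maps_continuous
    (X : Type*) [TopologicalSpace X] [T35Space X] :
    IsSequentiallyAscoli X ↔
      ∀ (Γ : Type u) (T : X → lp (fun _ : Γ => ℝ) ⊤),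
        -- (a) `T` is k-continuous
        (∀ A : Set X, IsCompact A → ContinuousOn T A) →
        -- (b) every pairing with an element of `ℓ₁(Γ)` is continuous
        (∀ a : lp (fun _ : Γ => ℝ) 1, Continuous fun x => ∑' γ, a γ * T x γ) →
        -- (c) almost k-sequentiality
        (∃ ε : ℝ, 0 < ε ∧ ∃ u : ℕ → C(X, ℝ),
          Filter.Tendsto u Filter.atTop (nhds (0 : C(X, ℝ))) ∧
          ∀ a : lp (fun _ : Γ => ℝ) 1, ‖a‖ ≤ ε →
            ∃ g ∈ closure (absConvexHullOf (Set.range u)), ∀ x : X, g x = ∑' γ, a γ * T x γ) →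
        Continuous T :=
  sequentiallyAscoli_iff_ellInfty_maps_continuous_general X
end

section
/- Let X be a Tychonoff (completely regular Hausdorff) space, M > 0, and let K be a compact subset of C_k(X) such that |f(x)| ≤ M for every f ∈ K and every x ∈ X. Define T : X → ℓ∞(K) by T(x) = (f(x))_{f∈K}. Then T is well defined (T(x) is a bounded function on K for each x) and T is k-continuous, i.e. the restriction of T to every compact subset A of X is continuous into ℓ∞(K) with the sup norm. -/
/-!
A compact set `K ⊆ C_k(X)` is totally bounded for the uniformity of uniform convergence on a
compact set `A`, so it has a finite `ε/3`-net on `A`; continuity of the finitely many net members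
at `x₀` and the triangle inequality make `K` equicontinuous on `A`. Equicontinuity of `K` on `A`
is precisely continuity of `x ↦ (f x)_{f ∈ K}` on `A` for the sup norm. Boundedness of each
`T x` holds because `f ↦ f x` is continuous on the compact set `K`.
-/

open Filter Set Topology Uniformity

namespace ContinuousMap

variable {X α : Type*} [TopologicalSpace X] [PseudoMetricSpace α]

theorem setOf_forall_dist_lt_mem_uniformity {A : Set X} (hA : IsCompact A) {δ : ℝ}
    (hδ : 0 < δ) :
    {fg : C(X, α) × C(X, α) | ∀ x ∈ A, dist (fg.1 x) (fg.2 x) < δ} ∈ 𝓤 C(X, α) :=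
  (mem_compactConvergence_entourage_iff _).2
    ⟨A, {p | dist p.1 p.2 < δ}, hA, Metric.dist_mem_uniformity hδ, fun _ h => h⟩

end ContinuousMap

theorem IsCompact.equicontinuousOn_coe {X α : Type*} [TopologicalSpace X] [PseudoMetricSpace α]
    {K : Set C(X, α)} (hK : IsCompact K) {A : Set X} (hA : IsCompact A) :
    EquicontinuousOn (fun f : K => (f : X → α)) A := by
  intro x₀ hx₀
  rw [Metric.uniformity_basis_dist.equicontinuousWithinAt_iff_right]
  intro ε hε
  have hε3 : 0 < ε / 3 := by positivity
  obtain ⟨t, -, ht, hKt⟩ := totallyBounded_iff_subset.1 hK.totallyBounded _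
    (ContinuousMap.setOf_forall_dist_lt_mem_uniformity hA hε3)
  have hnet : ∀ᶠ x in 𝓝[A] x₀, ∀ f ∈ t, dist (f x₀) (f x) < ε / 3 :=
    (eventually_all_finite ht).2 fun f _ =>
      (Metric.tendsto_nhds.1 f.continuous.continuousWithinAt _ hε3).mono fun _ h => by
        rwa [dist_comm]
  filter_upwards [hnet, self_mem_nhdsWithin] with x hx hxA
  rintro ⟨g, hg⟩
  obtain ⟨f, hft, hgf⟩ := mem_iUnion₂.1 (hKt hg)
  have hgf : ∀ y ∈ A, dist (g y) (f y) < ε / 3 := hgf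
  calc dist (g x₀) (g x) ≤ dist (g x₀) (f x₀) + dist (f x₀) (f x) + dist (f x) (g x) :=
        dist_triangle4 _ _ _ _
    _ < ε / 3 + ε / 3 + ε / 3 := by
        gcongr
        · exact hgf x₀ hx₀
        · exact hx f hft
        · rw [dist_comm]; exact hgf x hxA
    _ = ε := by ring

theorem IsCompact.memℓp_infty_eval {X E : Type*} [TopologicalSpace X] [NormedAddCommGroup E]
    {K : Set C(X, E)} (hK : IsCompact K) (x : X) : Memℓp (fun f : K => f.1 x) ⊤ := by
  rw [memℓp_infty_iff, ← image_eq_range (fun f : C(X, E) => ‖f x‖)]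
  exact hK.bddAbove_image (continuous_norm.comp (continuous_eval_const x)).continuousOn

theorem lp.continuousOn_of_equicontinuousOn {ι X E : Type*} [TopologicalSpace X]
    [NormedAddCommGroup E] {F : ι → X → E} {A : Set X} (hF : EquicontinuousOn F A)
    {T : X → lp (fun _ : ι => E) ⊤} (hT : ∀ x i, T x i = F i x) : ContinuousOn T A := by
  intro x₀ hx₀
  rw [ContinuousWithinAt, Metric.tendsto_nhds]
  intro ε hε
  have hε2 : 0 < ε / 2 := by positivity
  filter_upwards [Metric.uniformity_basis_dist.equicontinuousWithinAt_iff_right.1 (hF x₀ hx₀)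
    (ε / 2) hε2] with x hx
  have hcoord : ∀ i, ‖(T x - T x₀) i‖ ≤ ε / 2 := fun i => by
    rw [lp.coeFn_sub, Pi.sub_apply, hT, hT, ← dist_eq_norm, dist_comm]
    exact (hx i).le
  calc dist (T x) (T x₀) = ‖T x - T x₀‖ := dist_eq_norm _ _
    _ ≤ ε / 2 := lp.norm_le_of_forall_le hε2.le hcoord
    _ < ε := half_lt_self hε

theorem evaluation_into_ellInfty_k_continuous_general
    (X : Type*) [TopologicalSpace X]
    (K : Set C(X, ℝ)) (hK : IsCompact K) :
    -- `T` is well defined: `(f (x))_{f ∈ K}` is a bounded function on `K`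
    (∀ x : X, Memℓp (fun f : K => f.1 x) ⊤) ∧
      -- and `T` is k-continuous into `ℓ∞(K)` with the sup norm
      ∀ T : X → lp (fun _ : K => ℝ) ⊤,
        (∀ (x : X) (f : K), T x f = f.1 x) →
        ∀ A : Set X, IsCompact A → ContinuousOn T A :=
  ⟨hK.memℓp_infty_eval, fun _ hT _ hA =>
    lp.continuousOn_of_equicontinuousOn (hK.equicontinuousOn_coe hA) hT⟩

theorem evaluation_into_ellInfty_k_continuous
    (X : Type*) [TopologicalSpace X] [T35Space X]
    (M : ℝ) (hM : 0 < M)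
    (K : Set C(X, ℝ)) (hK : IsCompact K)
    (hbd : ∀ f ∈ K, ∀ x : X, |f x| ≤ M) :
    -- `T` is well defined: `(f (x))_{f ∈ K}` is a bounded function on `K`
    (∀ x : X, Memℓp (fun f : K => f.1 x) ⊤) ∧
      -- and `T` is k-continuous into `ℓ∞(K)` with the sup norm
      ∀ T : X → lp (fun _ : K => ℝ) ⊤,
        (∀ (x : X) (f : K), T x f = f.1 x) →
        ∀ A : Set X, IsCompact A → ContinuousOn T A :=
  evaluation_into_ellInfty_k_continuous_general X K hK
end

section
/- Let X be a Tychonoff (completely regular Hausdorff) space and let K be a compact subset of C_k(X). Then K is evenly continuous (i.e. the evaluation map X × K → ℝ, (x, f) ↦ f(x), is continuous, where K carries the topology induced from C_k(X)) if and only if K is equicontinuous. -/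
open Filter Topology

section

variable {ι X α : Type*} [TopologicalSpace X] [TopologicalSpace ι] [UniformSpace α]
  {F : ι → X → α}

theorem Equicontinuous.continuous_prod_of_continuous (h : Equicontinuous F)
    (hF : ∀ x, Continuous fun i => F i x) : Continuous fun p : X × ι => F p.2 p.1 := by
  refine continuous_iff_continuousAt.mpr fun ⟨x₀, i₀⟩ => Uniform.tendsto_nhds_right.mpr ?_
  intro U hU
  obtain ⟨V, hV, hVU⟩ := comp_mem_uniformity_sets hU
  refine mem_map.mpr ?_
  have near_x₀ : ∀ᶠ x in 𝓝 x₀, ∀ i, (F i x₀, F i x) ∈ V := h x₀ V hV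
  have near_i₀ : ∀ᶠ i in 𝓝 i₀, (F i₀ x₀, F i x₀) ∈ V :=
    (hF x₀).continuousAt (mem_nhds_left _ hV)
  rw [nhds_prod_eq]
  filter_upwards [near_x₀.prod_mk near_i₀] with ⟨x, i⟩ ⟨hx, hi⟩
  exact hVU (SetRel.prodMk_mem_comp hi (hx i))

theorem equicontinuous_of_continuous_prod [CompactSpace ι]
    (h : Continuous fun p : X × ι => F p.2 p.1) : Equicontinuous F := by
  intro x₀ U hU
  obtain ⟨v, hv, hvU⟩ := isCompact_univ.mem_uniformity_of_prod (f := fun x i => F i x)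
    h.continuousOn (Set.mem_univ x₀) (symm_le_uniformity hU)
  rw [nhdsWithin_univ] at hv
  filter_upwards [hv] with x hx i using hvU x hx i (Set.mem_univ i)

end

theorem compact_evenlyContinuous_iff_equicontinuous_general
    (X : Type*) [TopologicalSpace X]
    (K : Set C(X, ℝ)) (hK : IsCompact K) :
    -- `K` is evenly continuous, i.e. the evaluation map `X × K → ℝ` is continuous,
    (Continuous fun p : X × K => p.2.1 p.1) ↔
      -- if and only if `K` is equicontinuous
      Equicontinuous fun f : K => ⇑f.1 := by
  have : CompactSpace K := isCompact_iff_compactSpace.mp hK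
  refine ⟨equicontinuous_of_continuous_prod (F := fun f : K => ⇑f.1), fun h =>
    h.continuous_prod_of_continuous fun x => (continuous_eval_const x).comp continuous_subtype_val⟩

theorem compact_evenlyContinuous_iff_equicontinuous
    (X : Type*) [TopologicalSpace X] [T35Space X]
    (K : Set C(X, ℝ)) (hK : IsCompact K) :
    -- `K` is evenly continuous, i.e. the evaluation map `X × K → ℝ` is continuous,
    (Continuous fun p : X × K => p.2.1 p.1) ↔
      -- if and only if `K` is equicontinuous
      Equicontinuous fun f : K => ⇑f.1 :=
  compact_evenlyContinuous_iff_equicontinuous_general X K hK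
end

section
/- Let X be a Tychonoff (completely regular Hausdorff) Ascoli space, Γ a set, and T : X → ℓ∞(Γ) a map such that each coordinate function f_γ : x ↦ T(x)(γ) is continuous on X. If there is a compact subset K of C_k(X) such that {f_γ : γ ∈ Γ} is contained in the closure in C_k(X) of the absolutely convex hull of K, then T is continuous (into ℓ∞(Γ) with the sup-norm topology). -/
/-! The Ascoli property makes `K` equicontinuous at each `x₀`. A bound `|f x - f x₀| ≤ r` valid
on `K` survives absolutely convex combinations (since `∑ |λᵢ| ≤ 1`) and then closure in `C_k(X)`
(it is a closed condition, being defined through evaluations). It therefore holds for every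
coordinate function, and the supremum norm of `T x - T x₀` is at most `r`. -/

open Filter Topology

section AbsConvexHull

variable {X : Type*} [TopologicalSpace X] {K : Set C(X, ℝ)} {x y : X} {r : ℝ}

theorem abs_sub_le_of_mem_absConvexHullOf (hr : 0 ≤ r) (hK : ∀ f ∈ K, |f x - f y| ≤ r)
    {g : C(X, ℝ)} (hg : g ∈ absConvexHullOf K) : |g x - g y| ≤ r := by
  obtain ⟨n, c, f, hfK, hc, rfl⟩ := hg
  simp only [ContinuousMap.coe_sum, ContinuousMap.coe_smul, Finset.sum_apply, Pi.smul_apply,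
    smul_eq_mul, ← Finset.sum_sub_distrib, ← mul_sub]
  calc |∑ i, c i * (f i x - f i y)| ≤ ∑ i, |c i| * |f i x - f i y| := by
        simpa only [abs_mul] using Finset.abs_sum_le_sum_abs (fun i ↦ c i * (f i x - f i y)) _
    _ ≤ ∑ i, |c i| * r := by gcongr with i; exact hK _ (hfK i)
    _ = (∑ i, |c i|) * r := (Finset.sum_mul ..).symm
    _ ≤ r := mul_le_of_le_one_left hr hc

theorem abs_sub_le_of_mem_closure_absConvexHullOf (hr : 0 ≤ r)
    (hK : ∀ f ∈ K, |f x - f y| ≤ r) {g : C(X, ℝ)} (hg : g ∈ closure (absConvexHullOf K)) :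
    |g x - g y| ≤ r := by
  have hclosed : IsClosed {g : C(X, ℝ) | |g x - g y| ≤ r} :=
    isClosed_le ((continuous_eval_const x).sub (continuous_eval_const y)).abs continuous_const
  exact closure_minimal (fun _ ↦ abs_sub_le_of_mem_absConvexHullOf hr hK) hclosed hg

end AbsConvexHull

theorem IsAscoli.eventually_forall_abs_sub_lt {X : Type*} [TopologicalSpace X] (hX : IsAscoli X)
    {K : Set C(X, ℝ)} (hK : IsCompact K) (x₀ : X) {ε : ℝ} (hε : 0 < ε) :
    ∀ᶠ x in 𝓝 x₀, ∀ f ∈ K, |f x - f x₀| < ε := by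
  filter_upwards [Metric.equicontinuousAt_iff_right.mp (hX K hK x₀) ε hε] with x hx f hf
  simpa only [Real.dist_eq, abs_sub_comm] using hx ⟨f, hf⟩

universe u

theorem continuous_into_ellInfty_of_ascoli_general
    (X : Type*) [TopologicalSpace X] (hX : IsAscoli X)
    (Γ : Type u) (T : X → lp (fun _ : Γ => ℝ) ⊤)
    -- the coordinate functions lie in the closure of the absolutely convex hull
    -- of a compact subset `K` of `C_k(X)`
    (K : Set C(X, ℝ)) (hK : IsCompact K)
    (hsub : ∀ γ : Γ, ∃ g ∈ closure (absConvexHullOf K), ∀ x : X, g x = T x γ) :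
    Continuous T := by
  rw [Metric.continuous_iff']
  intro x₀ ε hε
  have hε2 : 0 ≤ ε / 2 := by positivity
  filter_upwards [hX.eventually_forall_abs_sub_lt hK x₀ (half_pos hε)] with x hx
  have hcoord : ∀ γ, ‖(T x - T x₀) γ‖ ≤ ε / 2 := by
    intro γ
    obtain ⟨g, hg, hgT⟩ := hsub γ
    simpa [hgT] using
      abs_sub_le_of_mem_closure_absConvexHullOf hε2 (fun f hf ↦ (hx f hf).le) hg
  calc dist (T x) (T x₀) = ‖T x - T x₀‖ := dist_eq_norm _ _
    _ ≤ ε / 2 := lp.norm_le_of_forall_le hε2 hcoord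
    _ < ε := half_lt_self hε

theorem continuous_into_ellInfty_of_ascoli
    (X : Type*) [TopologicalSpace X] [T35Space X] (hX : IsAscoli X)
    (Γ : Type u) (T : X → lp (fun _ : Γ => ℝ) ⊤)
    -- each coordinate function `x ↦ T x γ` is continuous
    (hcoord : ∀ γ : Γ, Continuous fun x => T x γ)
    -- the coordinate functions lie in the closure of the absolutely convex hull
    -- of a compact subset `K` of `C_k(X)`
    (K : Set C(X, ℝ)) (hK : IsCompact K)
    (hsub : ∀ γ : Γ, ∃ g ∈ closure (absConvexHullOf K), ∀ x : X, g x = T x γ) :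
    Continuous T :=
  continuous_into_ellInfty_of_ascoli_general X hX Γ T K hK hsub
end

section
/- Let X be a Tychonoff (completely regular Hausdorff) sequentially Ascoli space, Γ a set, and T : X → ℓ∞(Γ) a map such that each coordinate function f_γ : x ↦ T(x)(γ) is continuous on X. If there is a sequence (g_n) in C(X,ℝ) converging to 0 in C_k(X) such that {f_γ : γ ∈ Γ} is contained in the closure in C_k(X) of the absolutely convex hull of {g_n : n ∈ ℕ}, then T is continuous (into ℓ∞(Γ) with the sup-norm topology). -/
open Set

section Equicontinuity

variable {X : Type*} [TopologicalSpace X]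

theorem equicontinuousAt_absConvexHullOf {K : Set C(X, ℝ)} {x₀ : X}
    (hK : EquicontinuousAt (fun f : K => ⇑(f : C(X, ℝ))) x₀) :
    EquicontinuousAt (fun f : absConvexHullOf K => ⇑(f : C(X, ℝ))) x₀ := by
  rw [Metric.equicontinuousAt_iff_right] at hK ⊢
  intro ε hε
  filter_upwards [hK (ε / 2) (half_pos hε)] with x hx
  rintro ⟨_, n, c, f, hfK, hc, rfl⟩
  have hf : ∀ i, |f i x₀ - f i x| ≤ ε / 2 := fun i => (hx ⟨f i, hfK i⟩).le
  calc dist ((∑ i, c i • f i) x₀) ((∑ i, c i • f i) x)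
      = |∑ i, c i * (f i x₀ - f i x)| := by
        simp [Real.dist_eq, ContinuousMap.sum_apply, mul_sub, Finset.sum_sub_distrib]
    _ ≤ ∑ i, |c i| * (ε / 2) := by
        refine (Finset.abs_sum_le_sum_abs _ _).trans (Finset.sum_le_sum fun i _ => ?_)
        rw [abs_mul]
        exact mul_le_mul_of_nonneg_left (hf i) (abs_nonneg _)
    _ = (∑ i, |c i|) * (ε / 2) := (Finset.sum_mul _ _ _).symm
    _ ≤ 1 * (ε / 2) := mul_le_mul_of_nonneg_right hc (half_pos hε).le
    _ < ε := by linarith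

theorem equicontinuousAt_closure_absConvexHullOf {K : Set C(X, ℝ)} {x₀ : X}
    (hK : EquicontinuousAt (fun f : K => ⇑(f : C(X, ℝ))) x₀) :
    EquicontinuousAt (fun f : closure (absConvexHullOf K) => ⇑(f : C(X, ℝ))) x₀ :=
  (equicontinuousAt_absConvexHullOf hK).closure' continuous_coeFun

theorem lp.continuousAt_of_equicontinuousAt_apply {E Γ : Type*} [NormedAddCommGroup E]
    {T : X → lp (fun _ : Γ => E) ⊤} {x₀ : X}
    (hT : EquicontinuousAt (fun γ x => T x γ) x₀) : ContinuousAt T x₀ := by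
  rw [Metric.equicontinuousAt_iff_right] at hT
  rw [ContinuousAt, Metric.tendsto_nhds]
  intro ε hε
  filter_upwards [hT (ε / 2) (half_pos hε)] with x hx
  calc dist (T x) (T x₀) ≤ ε / 2 := by
        rw [dist_comm, dist_eq_norm]
        refine lp.norm_le_of_forall_le (half_pos hε).le fun γ => ?_
        rw [lp.coeFn_sub, Pi.sub_apply, ← dist_eq_norm]
        exact (hx γ).le
    _ < ε := half_lt_self hε

end Equicontinuity

universe u

theorem continuous_into_ellInfty_of_sequentiallyAscoli_general
    (X : Type*) [TopologicalSpace X] (hX : IsSequentiallyAscoli X)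
    (Γ : Type u) (T : X → lp (fun _ : Γ => ℝ) ⊤)
    -- the coordinate functions lie in the closure of the absolutely convex hull
    -- of the range of a null sequence `(g_n)` in `C_k(X)`
    (g : ℕ → C(X, ℝ)) (hg : Filter.Tendsto g Filter.atTop (nhds (0 : C(X, ℝ))))
    (hsub : ∀ γ : Γ, ∃ h ∈ closure (absConvexHullOf (Set.range g)), ∀ x : X, h x = T x γ) :
    Continuous T := by
  choose h h_mem h_eq using hsub
  have hg_equi : Equicontinuous fun n => ⇑(g n) := hX g 0 hg
  refine continuous_iff_continuousAt.2 fun x₀ => lp.continuousAt_of_equicontinuousAt_apply ?_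
  have hrange : EquicontinuousAt (fun f : range g => ⇑(f : C(X, ℝ))) x₀ := by
    convert (hg_equi x₀).comp (rangeSplitting g) using 1
    funext f
    simp [apply_rangeSplitting]
  have hhull := (equicontinuousAt_closure_absConvexHullOf hrange).comp fun γ => ⟨h γ, h_mem γ⟩
  convert hhull using 1
  funext γ x
  exact (h_eq γ x).symm

theorem continuous_into_ellInfty_of_sequentiallyAscoli
    (X : Type*) [TopologicalSpace X] [T35Space X] (hX : IsSequentiallyAscoli X)
    (Γ : Type u) (T : X → lp (fun _ : Γ => ℝ) ⊤)
    -- each coordinate function `x ↦ T x γ` is continuous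
    (hcoord : ∀ γ : Γ, Continuous fun x => T x γ)
    -- the coordinate functions lie in the closure of the absolutely convex hull
    -- of the range of a null sequence `(g_n)` in `C_k(X)`
    (g : ℕ → C(X, ℝ)) (hg : Filter.Tendsto g Filter.atTop (nhds (0 : C(X, ℝ))))
    (hsub : ∀ γ : Γ, ∃ h ∈ closure (absConvexHullOf (Set.range g)), ∀ x : X, h x = T x γ) :
    Continuous T :=
  continuous_into_ellInfty_of_sequentiallyAscoli_general X hX Γ T g hg hsub
end
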